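/- arXiv:1603.08833 — 2 statements merged into one kernel-verified Lean document; each statement's English description precedes it below -/
import Mathlib

section
/- Let H be an infinite set that is f̃-homogeneous up to finite changes for a stable coloring f : [ℕ]² → k with limit f̃ (i.e., f̃ is constant with value c on a cofinite subset of H). Then there exists an infinite subset H' ⊆ H that is homogeneous for f: f(x,y) = c for all x < y in H'. Moreover H' can be extracted by, for each element in order, discarding elements y for which f(x,y) ≠ c for some previously kept x. -/
theorem stmt_8 (k : ℕ) (f : ℕ → ℕ → Fin k) (ftilde : ℕ → Fin k)
    (hstable : ∀ x, ∃ N, ∀ s ≥ N, f x s = ftilde x)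
    (H : Set ℕ) (hinf : H.Infinite) (c : Fin k)
    (hhom : {x ∈ H | ftilde x ≠ c}.Finite) :
    ∃ H' : Set ℕ, H' ⊆ H ∧ H'.Infinite ∧ ∀ x ∈ H', ∀ y ∈ H', x < y → f x y = c := by
  classical
  have hG : (H \ {x ∈ H | ftilde x ≠ c}).Infinite := hinf.diff hhom
  set G := H \ {x ∈ H | ftilde x ≠ c} with hGdef
  have hGsub : G ⊆ H := Set.diff_subset
  have hGc : ∀ x ∈ G, ftilde x = c := by
    intro x hx
    by_contra h
    exact hx.2 ⟨hx.1, h⟩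
  choose N hN using hstable
  choose next hnextG hnextgt using fun m => hG.exists_gt m
  let a : ℕ → ℕ := fun n => Nat.rec (next 0) (fun _ an => next (max an (N an))) n
  have ha0 : a 0 = next 0 := rfl
  have haS : ∀ n, a (n + 1) = next (max (a n) (N (a n))) := fun n => rfl
  have haG : ∀ n, a n ∈ G := by
    intro n
    cases n with
    | zero => exact hnextG 0
    | succ n => rw [haS]; exact hnextG _
  have hamono : StrictMono a := by
    apply strictMono_nat_of_lt_succ
    intro n
    rw [haS]
    exact lt_of_le_of_lt (le_max_left _ _) (hnextgt _)
  have haN : ∀ i j, i < j → N (a i) < a j := by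
    intro i j hij
    have h1 : N (a i) < a (i + 1) := by
      rw [haS]
      exact lt_of_le_of_lt (le_max_right _ _) (hnextgt _)
    exact lt_of_lt_of_le h1 (hamono.monotone hij)
  refine ⟨Set.range a, ?_, ?_, ?_⟩
  · rintro x ⟨n, rfl⟩
    exact hGsub (haG n)
  · exact Set.infinite_range_of_injective hamono.injective
  · rintro x ⟨i, rfl⟩ y ⟨j, rfl⟩ hxy
    have hij : i < j := hamono.lt_iff_lt.mp hxy
    rw [hN (a i) (a j) (le_of_lt (haN i j hij))]
    exact hGc _ (haG i)
end

section
/- Let μ : ℕ → ℕ be positive and let f be the blockwise decreasing function defined by f(Σ_{j<n} μ(j) + k) = μ(n) − k − 1 for k < μ(n). If X is an infinite set non-decreasing for f, then X contains at most one element from each block B_n = [Σ_{j<n} μ(j), Σ_{j≤n} μ(j)). Consequently the principal function p_X of X satisfies p_X(n) ≥ Σ_{j<n} μ(j) for all n, since p_X(n) lies in a block B_{m_n} with m_n ≥ n. -/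
theorem stmt_10 (μ : ℕ → ℕ) (hμ : ∀ n, 1 ≤ μ n) (f : ℕ → ℕ)
    (hf : ∀ n k, k < μ n → f ((∑ j ∈ Finset.range n, μ j) + k) = μ n - k - 1)
    (X : Set ℕ) (hinf : X.Infinite)
    (hnd : ∀ x ∈ X, ∀ y ∈ X, x < y → f x ≤ f y) :
    (∀ n : ℕ, ∀ x ∈ X, ∀ y ∈ X,
        x ∈ Set.Ico (∑ j ∈ Finset.range n, μ j) (∑ j ∈ Finset.range (n + 1), μ j) →
        y ∈ Set.Ico (∑ j ∈ Finset.range n, μ j) (∑ j ∈ Finset.range (n + 1), μ j) →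
        x = y) ∧
      ∀ n : ℕ, (∑ j ∈ Finset.range n, μ j) ≤ Nat.nth (· ∈ X) n := by
  set S : ℕ → ℕ := fun n => ∑ j ∈ Finset.range n, μ j with hS
  have hSsucc : ∀ n, S (n + 1) = S n + μ n := by
    intro n; simp [hS, Finset.sum_range_succ]
  have hSmono : Monotone S := by
    apply monotone_nat_of_le_succ
    intro n; rw [hSsucc]; omega
  have hSn : ∀ n, n ≤ S n := by
    intro n
    induction n with
    | zero => simp
    | succ k ih => have := hμ k; rw [hSsucc]; omega
  -- key: strict decrease within block implies equality of two block elements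
  have key : ∀ n : ℕ, ∀ x ∈ X, ∀ y ∈ X,
      x ∈ Set.Ico (S n) (S (n + 1)) → y ∈ Set.Ico (S n) (S (n + 1)) → x = y := by
    intro n x hx y hy hxI hyI
    rcases hxI with ⟨hx1, hx2⟩
    rcases hyI with ⟨hy1, hy2⟩
    rw [hSsucc] at hx2 hy2
    have hk : x - S n < μ n := by omega
    have hk' : y - S n < μ n := by omega
    have hfx : f x = μ n - (x - S n) - 1 := by
      have := hf n (x - S n) hk
      rwa [show S n + (x - S n) = x by omega] at this
    have hfy : f y = μ n - (y - S n) - 1 := by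
      have := hf n (y - S n) hk'
      rwa [show S n + (y - S n) = y by omega] at this
    rcases lt_trichotomy x y with h | h | h
    · have := hnd x hx y hy h
      omega
    · exact h
    · have := hnd y hy x hx h
      omega
  refine ⟨key, ?_⟩
  -- block existence
  have hblock : ∀ m : ℕ, ∃ n, S n ≤ m ∧ m < S (n + 1) := by
    intro m
    have hex : ∃ n, m < S n := ⟨m + 1, lt_of_lt_of_le (Nat.lt_succ_self m) (hSn (m + 1))⟩
    classical
    have hpos : Nat.find hex ≠ 0 := by
      intro h
      have := Nat.find_spec hex
      rw [h] at this
      simp [hS] at this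
    obtain ⟨n', hn'⟩ := Nat.exists_eq_succ_of_ne_zero hpos
    refine ⟨n', ?_, ?_⟩
    · have := Nat.find_min hex (m := n') (by omega)
      omega
    · have := Nat.find_spec hex
      rwa [hn'] at this
  have hmem : ∀ n, Nat.nth (· ∈ X) n ∈ X := fun n =>
    Nat.nth_mem_of_infinite (by simpa using hinf) n
  have hlt : ∀ n, Nat.nth (· ∈ X) n < Nat.nth (· ∈ X) (n + 1) := fun n =>
    (Nat.nth_lt_nth (by simpa using hinf)).mpr (Nat.lt_succ_self n)
  -- show block index of nth n is at least n
  have main : ∀ n, ∃ b, n ≤ b ∧ S b ≤ Nat.nth (· ∈ X) n ∧ Nat.nth (· ∈ X) n < S (b + 1) := by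
    intro n
    induction n with
    | zero =>
      obtain ⟨b, h1, h2⟩ := hblock (Nat.nth (· ∈ X) 0)
      exact ⟨b, Nat.zero_le b, h1, h2⟩
    | succ k ih =>
      obtain ⟨b, hkb, hb1, hb2⟩ := ih
      obtain ⟨b', h1, h2⟩ := hblock (Nat.nth (· ∈ X) (k + 1))
      refine ⟨b', ?_, h1, h2⟩
      have hlt' := hlt k
      have hbb' : b < b' := by
        rcases lt_trichotomy b b' with h | h | h
        · exact h
        · exfalso
          have := key b (Nat.nth (· ∈ X) k) (hmem k) (Nat.nth (· ∈ X) (k + 1)) (hmem (k + 1))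
            ⟨hb1, hb2⟩ ⟨h ▸ h1, h ▸ h2⟩
          omega
        · exfalso
          have : S (b' + 1) ≤ S b := hSmono (by omega)
          omega
      omega
  intro n
  obtain ⟨b, hnb, hb1, _⟩ := main n
  exact le_trans (hSmono hnb) hb1
end
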